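/- For every 0 ≤ q ≤ n−1, the equality (s_{n−q−1}s_{n−q−2}⋯s_1)·t·p_{n,q} = p_{n,q+1}·t·(s_1 s_2⋯s_q) holds in W_n (the product s_{n−q−1}⋯s_1 being empty when q = n−1 and the product s_1⋯s_q being empty when q = 0), and both sides are reduced expressions for the common element Π_{n,q}: its length is ℓ(Π_{n,q}) = (q+1)(n−q). -/

import Mathlib

/-!
Both sides act on `±1, …, ±n` as the signed permutation `i ↦ i + n - q` (`i ≤ q`),
`q + 1 ↦ -(n - q)`, `i ↦ i - q - 1` (`i ≥ q + 2`), so the identity is checked pointwise.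
The right-hand side is a word of length `(q + 1)(n - q - 1) + 1 + q = (q + 1)(n - q)`.
Conversely, `inv + nsp + neg` grows by at most one under right multiplication by a generator
(for `t` the pairs `(1, j)` just trade their inversion for a negative sum and back), and on
`Π_{n,q}` it is at least `q(n - q) + (n - q - 1) + 1`.
-/

namespace BnPaper

/-- The generator `t`: swaps `1` and `-1`, fixing all other points. -/
def t : Equiv.Perm ℤ := Equiv.swap 1 (-1)

/-- The generator `s i`: swaps `i ↔ i+1` and `-i ↔ -(i+1)`. -/
def s (i : ℤ) : Equiv.Perm ℤ := Equiv.swap i (i + 1) * Equiv.swap (-i) (-(i + 1))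

/-- The descending product `s_j · s_{j-1} ⋯ s_i` (the identity when `i > j`). -/
def desc (i j : ℕ) : Equiv.Perm ℤ :=
  ((List.range (j + 1 - i)).map (fun k => s ((j : ℤ) - (k : ℤ)))).prod

/-- The ascending product `s_i · s_{i+1} ⋯ s_j` (the identity when `i > j`). -/
def asc (i j : ℕ) : Equiv.Perm ℤ :=
  ((List.range (j + 1 - i)).map (fun k => s ((i : ℤ) + (k : ℤ)))).prod

/-- `t_j = s_{j-1} ⋯ s_1 · t · s_1 ⋯ s_{j-1}`. -/
def tt (j : ℕ) : Equiv.Perm ℤ := desc 1 (j - 1) * t * (desc 1 (j - 1))⁻¹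

/-- The Coxeter generating set `{t, s_1, …, s_{n-1}}` of `W_n`. -/
def gens (n : ℕ) : Set (Equiv.Perm ℤ) :=
  insert t {g | ∃ i : ℕ, 1 ≤ i ∧ i ≤ n - 1 ∧ g = s (i : ℤ)}

/-- The Coxeter length: the least number of generators whose product is `w`. -/
noncomputable def len (n : ℕ) (w : Equiv.Perm ℤ) : ℕ :=
  sInf {k | ∃ l : List (Equiv.Perm ℤ), l.length = k ∧ (∀ g ∈ l, g ∈ gens n) ∧ l.prod = w}

/-- `W_n` realised as the signed permutations of `{-n, …, -1, 1, …, n}`: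
permutations of `ℤ` that are odd (`w(-i) = -w(i)`) and fix everything beyond `n` in
absolute value. -/
def W (n : ℕ) : Set (Equiv.Perm ℤ) :=
  {w | (∀ i : ℤ, w (-i) = -(w i)) ∧ ∀ i : ℤ, (n : ℤ) < |i| → w i = i}

/-- The right descent set `Des(w)`. -/
def Des (n : ℕ) (w : Equiv.Perm ℤ) : Set (Equiv.Perm ℤ) :=
  {g | g ∈ gens n ∧ len n (w * g) < len n w}

/-- The enhanced descent-set invariant
`ρ_m(w) = Des(w) ∪ {t_j : 2 ≤ j ≤ m, ℓ(w t_j) < ℓ(w)}`. -/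
def rho (n m : ℕ) (w : Equiv.Perm ℤ) : Set (Equiv.Perm ℤ) :=
  Des n w ∪ {g | ∃ j : ℕ, 2 ≤ j ∧ j ≤ m ∧ g = tt j ∧ len n (w * tt j) < len n w}

/-- `Área_n`: the negative entries of the row form appear in increasing order and
the positive entries in strictly decreasing order. -/
def Area (n : ℕ) : Set (Equiv.Perm ℤ) :=
  {w | w ∈ W n ∧ ∀ i j : ℤ, 1 ≤ i → i < j → j ≤ (n : ℤ) →
    (w i < 0 → w j < 0 → w i < w j) ∧ (0 < w i → 0 < w j → w j < w i)}

/-- The suffix relation `y ≤_e w`: `w = z · y` with `ℓ(w) = ℓ(z) + ℓ(y)`. -/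
def Suf (n : ℕ) (y w : Equiv.Perm ℤ) : Prop :=
  ∃ z, z ∈ W n ∧ w = z * y ∧ len n w = len n z + len n y

/-- `a_q = (t)(s_1 t)(s_2 s_1 t) ⋯ (s_{q-1} ⋯ s_1 t)`. -/
def aw (q : ℕ) : Equiv.Perm ℤ := ((List.range q).map (fun k => desc 1 k * t)).prod

/-- `b_q = (s_{q+1})(s_{q+2} s_{q+1}) ⋯ (s_{n-1} ⋯ s_{q+1})` (identity for `q ≥ n-1`). -/
def bw (n q : ℕ) : Equiv.Perm ℤ :=
  ((List.range (n - 1 - q)).map (fun k => desc (q + 1) (q + 1 + k))).prod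

/-- `σ_{n,q} = a_q · b_q`. -/
def sig (n q : ℕ) : Equiv.Perm ℤ := aw q * bw n q

/-- `p_{n,q} = (s_{n-q} ⋯ s_1)(s_{n-q+1} ⋯ s_2) ⋯ (s_{n-1} ⋯ s_q)`,
with `p_{n,0} = p_{n,n} = e`. -/
def p (n q : ℕ) : Equiv.Perm ℤ :=
  ((List.range q).map (fun m => desc (1 + m) (n - q + m))).prod

/-- `Π_{n,q} = (s_{n-q-1} ⋯ s_1) · t · p_{n,q}`. -/
def PiElt (n q : ℕ) : Equiv.Perm ℤ := desc 1 (n - q - 1) * t * p n q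

/-- `Υ(w) = {z ∈ Área_n : Des(z) = Des(w)}`. -/
def Ups (n : ℕ) (w : Equiv.Perm ℤ) : Set (Equiv.Perm ℤ) :=
  {z | z ∈ Area n ∧ Des n z = Des n w}

/-- The parabolic subgroup `W_J = ⟨s_1, …, s_{n-1}⟩`. -/
def WJ (n : ℕ) : Set (Equiv.Perm ℤ) :=
  ↑(Subgroup.closure {g | ∃ i : ℕ, 1 ≤ i ∧ i ≤ n - 1 ∧ g = s (i : ℤ)})

/-- The parabolic subgroup `W_K = ⟨t, s_1, …, s_{n-2}⟩`. -/
def WK (n : ℕ) : Set (Equiv.Perm ℤ) :=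
  ↑(Subgroup.closure (insert t {g | ∃ i : ℕ, 1 ≤ i ∧ i ≤ n - 2 ∧ g = s (i : ℤ)}))

/-- Knuth relation of type `I_k` : `w' = w · s_{i+1}` when
`w(i+1) < w(i) < w(i+2)` or `w(i+2) < w(i) < w(i+1)`. -/
def stepI (k : ℕ) (w w' : Equiv.Perm ℤ) : Prop :=
  ∃ i : ℤ, 1 ≤ i ∧ i ≤ (k : ℤ) - 2 ∧
    ((w (i + 1) < w i ∧ w i < w (i + 2)) ∨ (w (i + 2) < w i ∧ w i < w (i + 1))) ∧
    w' = w * s (i + 1)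

/-- Knuth relation of type `II_k` : `w' = w · s_i` when
`w(i+1) < w(i+2) < w(i)` or `w(i) < w(i+2) < w(i+1)`. -/
def stepII (k : ℕ) (w w' : Equiv.Perm ℤ) : Prop :=
  ∃ i : ℤ, 1 ≤ i ∧ i ≤ (k : ℤ) - 2 ∧
    ((w (i + 1) < w (i + 2) ∧ w (i + 2) < w i) ∨ (w i < w (i + 2) ∧ w (i + 2) < w (i + 1))) ∧
    w' = w * s i

/-- Knuth relation of type `III_k` : `w' = w · s_i` when `w(i)` and `w(i+1)` have
opposite signs. -/
def stepIII (k : ℕ) (w w' : Equiv.Perm ℤ) : Prop :=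
  ∃ i : ℤ, 1 ≤ i ∧ i ≤ (k : ℤ) - 1 ∧
    ((w i < 0 ∧ 0 < w (i + 1)) ∨ (w (i + 1) < 0 ∧ 0 < w i)) ∧
    w' = w * s i

lemma t_apply (x : ℤ) : t x = if x = 1 then -1 else if x = -1 then 1 else x := by
  simp only [t, Equiv.swap_apply_def]

lemma s_apply {i : ℤ} (hi : 1 ≤ i) (x : ℤ) :
    s i x = if x = i then i + 1 else if x = i + 1 then i else if x = -i then -(i + 1)
      else if x = -(i + 1) then -i else x := by
  simp only [s, Equiv.Perm.mul_apply, Equiv.swap_apply_def]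
  omega

lemma desc_eq_prod (i j : ℕ) :
    desc i j = ((List.range (j + 1 - i)).map (fun k : ℕ => s (j - k : ℤ))).prod := by
  simp only [desc, List.pure_def, List.bind_eq_flatMap, ← List.map_eq_flatMap, List.map_map]
  rfl

lemma asc_eq_prod (i j : ℕ) :
    asc i j = ((List.range (j + 1 - i)).map (fun k : ℕ => s (i + k : ℤ))).prod := by
  simp only [asc, List.pure_def, List.bind_eq_flatMap, ← List.map_eq_flatMap, List.map_map]
  rfl

lemma desc_eq_one {i j : ℕ} (h : j < i) : desc i j = 1 := by
  simp [desc_eq_prod, Nat.sub_eq_zero_of_le h]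

lemma asc_eq_one {i j : ℕ} (h : j < i) : asc i j = 1 := by
  simp [asc_eq_prod, Nat.sub_eq_zero_of_le h]

lemma desc_succ {i j : ℕ} (h : i ≤ j + 1) : desc i (j + 1) = s (j + 1) * desc i j := by
  rw [desc_eq_prod, desc_eq_prod, show j + 1 + 1 - i = j + 1 - i + 1 by omega,
    List.range_succ_eq_map, List.map_cons, List.prod_cons, List.map_map]
  congr 3
  funext k
  simp only [Function.comp_apply]
  push_cast
  ring_nf

lemma asc_succ {i j : ℕ} (h : i ≤ j + 1) : asc i (j + 1) = asc i j * s (j + 1) := by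
  rw [asc_eq_prod, asc_eq_prod, show j + 1 + 1 - i = j + 1 - i + 1 by omega, List.range_succ,
    List.map_append, List.prod_append, List.map_singleton, List.prod_singleton]
  congr 2
  push_cast [Nat.cast_sub h]
  ring

def descFun (i j : ℕ) (x : ℤ) : ℤ :=
  if x = i then j + 1
  else if i + 1 ≤ x ∧ x ≤ j + 1 then x - 1
  else if x = -i then -(j + 1)
  else if -(j + 1 : ℤ) ≤ x ∧ x ≤ -(i + 1) then x + 1
  else x

def ascFun (i j : ℕ) (x : ℤ) : ℤ :=
  if x = j + 1 then i
  else if i ≤ x ∧ x ≤ j then x + 1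
  else if x = -(j + 1 : ℤ) then -i
  else if -(j : ℤ) ≤ x ∧ x ≤ -i then x - 1
  else x

lemma desc_apply {i j : ℕ} (hi : 1 ≤ i) (hij : i ≤ j + 1) (x : ℤ) :
    desc i j x = descFun i j x := by
  induction j with
  | zero =>
    rw [desc_eq_one (by omega)]
    simp only [descFun, Equiv.Perm.one_apply]
    omega
  | succ j ih =>
    rcases Nat.lt_or_ge (j + 1) i with hji | hji
    · rw [desc_eq_one (by omega)]
      simp only [descFun, Equiv.Perm.one_apply]
      omega
    · rw [desc_succ hji, Equiv.Perm.mul_apply, ih (by omega), s_apply (by omega)]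
      simp only [descFun]
      push_cast
      omega

lemma asc_apply {i j : ℕ} (hi : 1 ≤ i) (hij : i ≤ j + 1) (x : ℤ) :
    asc i j x = ascFun i j x := by
  induction j generalizing x with
  | zero =>
    rw [asc_eq_one (by omega)]
    simp only [ascFun, Equiv.Perm.one_apply]
    omega
  | succ j ih =>
    rcases Nat.lt_or_ge (j + 1) i with hji | hji
    · rw [asc_eq_one (by omega)]
      simp only [ascFun, Equiv.Perm.one_apply]
      omega
    · rw [asc_succ hji, Equiv.Perm.mul_apply, s_apply (by omega), ih (by omega)]
      simp only [ascFun]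
      push_cast
      omega

def pFun (n q : ℕ) (x : ℤ) : ℤ :=
  if 1 ≤ x ∧ x ≤ q then x + (n - q)
  else if q + 1 ≤ x ∧ x ≤ n then x - q
  else if -(q : ℤ) ≤ x ∧ x ≤ -1 then x - (n - q)
  else if -(n : ℤ) ≤ x ∧ x ≤ -(q + 1) then x + q
  else x

lemma p_succ {n q : ℕ} (h : q + 1 ≤ n) : p n (q + 1) = p (n - 1) q * desc (q + 1) (n - 1) := by
  rw [p, p, List.range_succ, List.map_append, List.prod_append, List.map_singleton,
    List.prod_singleton]
  congr 2
  · exact List.map_congr_left fun m _ => by congr 1; omega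
  · omega
  · omega

lemma p_apply {n q : ℕ} (hq : q ≤ n) (x : ℤ) : p n q x = pFun n q x := by
  induction q generalizing n x with
  | zero =>
    simp only [p, List.range_zero, List.map_nil, List.prod_nil, Equiv.Perm.one_apply, pFun]
    omega
  | succ q ih =>
    rw [p_succ hq, Equiv.Perm.mul_apply, desc_apply (by omega) (by omega),
      ih (by omega : q ≤ n - 1)]
    simp only [pFun, descFun]
    push_cast [Nat.cast_sub (by omega : 1 ≤ n)]
    omega

def PiFun (n q : ℕ) (x : ℤ) : ℤ :=
  if 1 ≤ x ∧ x ≤ q then x + (n - q)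
  else if x = q + 1 then -(n - q)
  else if q + 2 ≤ x ∧ x ≤ n then x - q - 1
  else if -(q : ℤ) ≤ x ∧ x ≤ -1 then x - (n - q)
  else if x = -(q + 1 : ℤ) then n - q
  else if -(n : ℤ) ≤ x ∧ x ≤ -(q + 2) then x + q + 1
  else x

lemma PiElt_apply {n q : ℕ} (hqn : q < n) (x : ℤ) : PiElt n q x = PiFun n q x := by
  rw [PiElt, Equiv.Perm.mul_apply, Equiv.Perm.mul_apply, p_apply hqn.le, t_apply,
    desc_apply le_rfl (by omega)]
  unfold pFun descFun PiFun
  omega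

lemma p_mul_t_mul_asc_apply {n q : ℕ} (hqn : q < n) (x : ℤ) :
    (p n (q + 1) * t * asc 1 q) x = PiFun n q x := by
  rw [Equiv.Perm.mul_apply, Equiv.Perm.mul_apply, asc_apply le_rfl (by omega), t_apply,
    p_apply hqn]
  unfold pFun ascFun PiFun
  omega

lemma PiElt_eq {n q : ℕ} (hqn : q < n) : PiElt n q = p n (q + 1) * t * asc 1 q :=
  Equiv.ext fun x => (PiElt_apply hqn x).trans (p_mul_t_mul_asc_apply hqn x).symm

open Finset

section LengthFormula

variable {n : ℕ}

noncomputable def pairsWith (n : ℕ) (r : ℤ → ℤ → Prop) [DecidableRel r]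
    (w : Equiv.Perm ℤ) : Finset (ℤ × ℤ) :=
  {x ∈ Icc 1 (n : ℤ) ×ˢ Icc 1 (n : ℤ) | x.1 < x.2 ∧ r (w x.1) (w x.2)}

/-- `inv + nsp + neg`: Björner–Brenti's combinatorial formula for the length in `B_n`. -/
noncomputable def lengthB (n : ℕ) (w : Equiv.Perm ℤ) : ℕ :=
  #(pairsWith n (fun a b => b < a) w) + #(pairsWith n (fun a b => a + b < 0) w) +
    #{i ∈ Icc 1 (n : ℤ) | w i < 0}

lemma lengthB_one : lengthB n 1 = 0 := by
  simp only [lengthB, pairsWith, Equiv.Perm.one_apply, Nat.add_eq_zero_iff, card_eq_zero]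
  refine ⟨⟨filter_false_of_mem ?_, filter_false_of_mem ?_⟩, filter_false_of_mem ?_⟩ <;>
    simp only [mem_product, mem_Icc] <;> omega

variable (r : ℤ → ℤ → Prop) [DecidableRel r]

lemma mk_mem_pairsWith {w : Equiv.Perm ℤ} {i j : ℤ} (hi : 1 ≤ i) (hij : i < j) (hj : j ≤ n)
    (h : r (w i) (w j)) : (i, j) ∈ pairsWith n r w := by
  simp only [pairsWith, mem_filter, mem_product, mem_Icc]
  exact ⟨⟨⟨hi, by omega⟩, by omega, hj⟩, hij, h⟩

lemma card_erase_pairsWith_mul_s_le (w : Equiv.Perm ℤ) {k : ℤ} (hk : 1 ≤ k)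
    (hkn : k + 1 ≤ n) :
    #((pairsWith n r (w * s k)).erase (k, k + 1)) ≤ #((pairsWith n r w).erase (k, k + 1)) := by
  refine card_le_card_of_injOn (fun x => (s k x.1, s k x.2)) (fun x hx => ?_) ?_
  · rw [mem_coe, mem_erase, pairsWith, mem_filter, mem_product, mem_Icc, mem_Icc] at hx ⊢
    obtain ⟨hne, hrange, hlt, hr⟩ := hx
    rw [ne_eq, Prod.ext_iff] at hne ⊢
    dsimp only
    have h1 := s_apply hk x.1
    have h2 := s_apply hk x.2
    exact ⟨by omega, by omega, by omega, hr⟩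
  · intro x _ y _ h
    simp only [Prod.ext_iff] at h ⊢
    exact ⟨(s k).injective h.1, (s k).injective h.2⟩

lemma card_pairsWith_mul_s_le (w : Equiv.Perm ℤ) {k : ℤ} (hk : 1 ≤ k) (hkn : k + 1 ≤ n) :
    #(pairsWith n r (w * s k)) ≤ #(pairsWith n r w) + 1 := by
  have := card_erase_pairsWith_mul_s_le r w hk hkn
  have := pred_card_le_card_erase (s := pairsWith n r (w * s k)) (a := (k, k + 1))
  have := card_erase_le (s := pairsWith n r w) (a := (k, k + 1))
  omega

/-- For a symmetric relation the swapped pair `(k, k + 1)` is counted on both sides. -/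
lemma card_pairsWith_mul_s_le_of_symm (hr : ∀ a b, r a b → r b a) (w : Equiv.Perm ℤ) {k : ℤ}
    (hk : 1 ≤ k) (hkn : k + 1 ≤ n) :
    #(pairsWith n r (w * s k)) ≤ #(pairsWith n r w) := by
  have herase := card_erase_pairsWith_mul_s_le r w hk hkn
  by_cases hmem : (k, k + 1) ∈ pairsWith n r (w * s k)
  · have hswap : r (w (k + 1)) (w k) := by
      simp only [pairsWith, mem_filter, Equiv.Perm.mul_apply, s_apply hk, ite_true,
        if_neg (by omega : k + 1 ≠ k)] at hmem
      exact hmem.2.2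
    have hmem' := mk_mem_pairsWith r hk (lt_add_one k) hkn (hr _ _ hswap)
    rw [← card_erase_add_one hmem, ← card_erase_add_one hmem']
    omega
  · rw [← erase_eq_of_notMem hmem]
    exact herase.trans card_erase_le

lemma card_neg_mul_s (w : Equiv.Perm ℤ) {k : ℤ} (hk : 1 ≤ k) (hkn : k + 1 ≤ n) :
    #{i ∈ Icc 1 (n : ℤ) | (w * s k) i < 0} = #{i ∈ Icc 1 (n : ℤ) | w i < 0} := by
  refine card_equiv (s k) fun i => ?_
  rw [mem_filter, mem_filter, mem_Icc, mem_Icc, Equiv.Perm.mul_apply]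
  have := s_apply hk i
  constructor <;> rintro ⟨h, hneg⟩ <;> exact ⟨by omega, hneg⟩

lemma lengthB_mul_s_le (w : Equiv.Perm ℤ) {k : ℤ} (hk : 1 ≤ k) (hkn : k + 1 ≤ n) :
    lengthB n (w * s k) ≤ lengthB n w + 1 := by
  have hinv := card_pairsWith_mul_s_le (fun a b => b < a) w hk hkn
  have hnsp := card_pairsWith_mul_s_le_of_symm (fun a b => a + b < 0)
    (fun a b h => by omega) w hk hkn
  have hneg := card_neg_mul_s w hk hkn
  simp only [lengthB]
  omega

lemma card_pairsWith_eq (u : Equiv.Perm ℤ) :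
    #(pairsWith n r u) =
      #{j ∈ Icc 2 (n : ℤ) | r (u 1) (u j)} + #{x ∈ pairsWith n r u | 2 ≤ x.1} := by
  rw [← card_filter_add_card_filter_not (s := pairsWith n r u) (fun x => 2 ≤ x.1), add_comm]
  congr 1
  refine card_nbij' (·.2) ((1, ·)) (fun x hx => ?_) (fun j hj => ?_) (fun x hx => ?_)
    (fun _ _ => rfl)
  · simp only [coe_filter, pairsWith, mem_filter, mem_product, mem_Icc,
      Set.mem_ofPred_eq] at hx ⊢
    obtain ⟨⟨⟨⟨h1, -⟩, -, h4⟩, hlt, hr⟩, h5⟩ := hx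
    rw [show x.1 = 1 by omega] at hr
    exact ⟨⟨by omega, h4⟩, hr⟩
  · simp only [coe_filter, pairsWith, mem_filter, mem_product, mem_Icc,
      Set.mem_ofPred_eq] at hj ⊢
    exact ⟨⟨⟨⟨le_rfl, by omega⟩, by omega, hj.1.2⟩, by omega, hj.2⟩, by omega⟩
  · simp only [coe_filter, pairsWith, mem_filter, mem_product, mem_Icc,
      Set.mem_ofPred_eq] at hx
    exact Prod.ext (by dsimp only; omega) rfl

lemma filter_pairsWith_congr {u v : Equiv.Perm ℤ} (h : ∀ j, 2 ≤ j → u j = v j) :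
    {x ∈ pairsWith n r u | 2 ≤ x.1} = {x ∈ pairsWith n r v | 2 ≤ x.1} := by
  simp only [pairsWith, filter_filter]
  refine filter_congr fun x _ => ?_
  constructor <;> rintro ⟨⟨hlt, hr⟩, h2⟩ <;> refine ⟨⟨hlt, ?_⟩, h2⟩
  · rwa [← h x.1 h2, ← h x.2 (by omega)]
  · rwa [h x.1 h2, h x.2 (by omega)]

lemma lengthB_mul_t_le {w : Equiv.Perm ℤ} (hw : w (-1) = -w 1) :
    lengthB n (w * t) ≤ lengthB n w + 1 := by
  have ht1 : (w * t) 1 = -w 1 := by simp [t_apply, hw]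
  have hfix : ∀ j, 2 ≤ j → (w * t) j = w j := fun j hj => by
    rw [Equiv.Perm.mul_apply, t_apply, if_neg (by omega), if_neg (by omega)]
  -- moving the sign of `w 1` trades inversions `(1, j)` for negative sum pairs `(1, j)`
  have hinv :
      #{j ∈ Icc 2 (n : ℤ) | (w * t) j < (w * t) 1} = #{j ∈ Icc 2 (n : ℤ) | w 1 + w j < 0} :=
    congrArg card (filter_congr fun j hj => by rw [ht1, hfix j (mem_Icc.1 hj).1]; omega)
  have hnsp :
      #{j ∈ Icc 2 (n : ℤ) | (w * t) 1 + (w * t) j < 0} = #{j ∈ Icc 2 (n : ℤ) | w j < w 1} :=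
    congrArg card (filter_congr fun j hj => by rw [ht1, hfix j (mem_Icc.1 hj).1]; omega)
  have hneg :
      #{i ∈ Icc 1 (n : ℤ) | (w * t) i < 0} ≤ #{i ∈ Icc 1 (n : ℤ) | w i < 0} + 1 := by
    calc #{i ∈ Icc 1 (n : ℤ) | (w * t) i < 0}
        ≤ #(insert 1 {i ∈ Icc 1 (n : ℤ) | w i < 0}) := card_le_card fun i hi => by
          simp only [mem_insert, mem_filter, mem_Icc] at hi ⊢
          by_cases hi1 : i = 1
          · exact .inl hi1
          · exact .inr ⟨hi.1, by rw [← hfix i (by omega)]; exact hi.2⟩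
      _ ≤ _ := card_insert_le _ _
  simp only [lengthB]
  rw [card_pairsWith_eq (fun a b => b < a) w, card_pairsWith_eq (fun a b => b < a) (w * t),
    card_pairsWith_eq (fun a b => a + b < 0) w, card_pairsWith_eq (fun a b => a + b < 0) (w * t),
    filter_pairsWith_congr _ hfix, filter_pairsWith_congr _ hfix, hinv, hnsp]
  omega

end LengthFormula

section Words

variable {n : ℕ}

def HasWord (n k : ℕ) (w : Equiv.Perm ℤ) : Prop :=
  ∃ l : List (Equiv.Perm ℤ), l.length = k ∧ (∀ g ∈ l, g ∈ gens n) ∧ l.prod = w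

lemma HasWord.mul {a b : ℕ} {u v : Equiv.Perm ℤ} (hu : HasWord n a u) (hv : HasWord n b v) :
    HasWord n (a + b) (u * v) := by
  obtain ⟨l₁, rfl, hl₁, rfl⟩ := hu
  obtain ⟨l₂, rfl, hl₂, rfl⟩ := hv
  refine ⟨l₁ ++ l₂, List.length_append, fun g hg => ?_, List.prod_append⟩
  exact (List.mem_append.1 hg).elim (hl₁ g) (hl₂ g)

lemma hasWord_of_mem_gens {g : Equiv.Perm ℤ} (hg : g ∈ gens n) : HasWord n 1 g :=
  ⟨[g], rfl, by simpa using hg, List.prod_singleton⟩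

lemma hasWord_list_prod {k : ℕ} {L : List (Equiv.Perm ℤ)} (h : ∀ x ∈ L, HasWord n k x) :
    HasWord n (L.length * k) L.prod := by
  induction L with
  | nil => exact ⟨[], by simp, by simp, rfl⟩
  | cons x L ih =>
    rw [List.length_cons, List.prod_cons, Nat.succ_mul, add_comm]
    exact (h x (by simp)).mul (ih fun y hy => h y (by simp [hy]))

lemma hasWord_s {i : ℕ} (hi : 1 ≤ i) (hin : i ≤ n - 1) : HasWord n 1 (s i) :=
  hasWord_of_mem_gens (Set.mem_insert_of_mem _ ⟨i, hi, hin, rfl⟩)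

lemma hasWord_desc {i j : ℕ} (hi : 1 ≤ i) (hj : j ≤ n - 1) :
    HasWord n (j + 1 - i) (desc i j) := by
  rw [desc_eq_prod]
  have hgen : ∀ x ∈ (List.range (j + 1 - i)).map (fun k : ℕ => s (j - k : ℤ)), HasWord n 1 x := by
    intro x hx
    obtain ⟨k, hk, rfl⟩ := List.mem_map.1 hx
    rw [List.mem_range] at hk
    simpa [Nat.cast_sub (by omega : k ≤ j)] using
      hasWord_s (n := n) (i := j - k) (by omega) (by omega)
  simpa using hasWord_list_prod hgen

lemma hasWord_asc {i j : ℕ} (hi : 1 ≤ i) (hj : j ≤ n - 1) :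
    HasWord n (j + 1 - i) (asc i j) := by
  rw [asc_eq_prod]
  have hgen : ∀ x ∈ (List.range (j + 1 - i)).map (fun k : ℕ => s (i + k : ℤ)), HasWord n 1 x := by
    intro x hx
    obtain ⟨k, hk, rfl⟩ := List.mem_map.1 hx
    rw [List.mem_range] at hk
    simpa using hasWord_s (n := n) (i := i + k) (by omega) (by omega)
  simpa using hasWord_list_prod hgen

lemma hasWord_p {q : ℕ} (hq : q ≤ n) : HasWord n (q * (n - q)) (p n q) := by
  have hgen : ∀ x ∈ (List.range q).map (fun m => desc (1 + m) (n - q + m)), HasWord n (n - q) x := by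
    intro x hx
    obtain ⟨m, hm, rfl⟩ := List.mem_map.1 hx
    rw [List.mem_range] at hm
    simpa [show n - q + m + 1 - (1 + m) = n - q by omega] using
      hasWord_desc (n := n) (i := 1 + m) (j := n - q + m) (by omega) (by omega)
  simpa [p] using hasWord_list_prod hgen

lemma t_neg (x : ℤ) : t (-x) = -t x := by
  simp only [t_apply]
  omega

lemma s_neg {i : ℤ} (hi : 1 ≤ i) (x : ℤ) : s i (-x) = -s i x := by
  simp only [s_apply hi]
  omega

lemma list_prod_neg {l : List (Equiv.Perm ℤ)} (hl : ∀ g ∈ l, g ∈ gens n) (x : ℤ) :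
    l.prod (-x) = -l.prod x := by
  refine List.prod_induction (fun w : Equiv.Perm ℤ => ∀ x, w (-x) = -w x)
    (fun u v hu hv x => ?_) (fun x => rfl) (fun g hg => ?_) x
  · simp only [Equiv.Perm.mul_apply, hv, hu]
  · rcases hl g hg with rfl | ⟨i, hi, -, rfl⟩
    · exact t_neg
    · exact s_neg (by omega)

lemma lengthB_le_of_hasWord {k : ℕ} {w : Equiv.Perm ℤ} (h : HasWord n k w) :
    lengthB n w ≤ k := by
  obtain ⟨l, rfl, hl, rfl⟩ := h
  induction l using List.reverseRecOn with
  | nil => simp [lengthB_one]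
  | append_singleton l g ih =>
    have hl' : ∀ g ∈ l, g ∈ gens n := fun g hg => hl g (by simp [hg])
    rw [List.prod_append, List.prod_singleton, List.length_append, List.length_singleton]
    have ih := ih hl'
    rcases hl g (by simp) with rfl | ⟨i, hi, hin, rfl⟩
    · exact (lengthB_mul_t_le (list_prod_neg hl' 1)).trans (by omega)
    · exact (lengthB_mul_s_le _ (by omega) (by omega)).trans (by omega)

lemma len_eq_of_hasWord {k : ℕ} {w : Equiv.Perm ℤ} (h : HasWord n k w)
    (hk : k ≤ lengthB n w) :
    len n w = k :=
  le_antisymm (Nat.sInf_le h) (le_csInf ⟨k, h⟩ fun _ hm => hk.trans (lengthB_le_of_hasWord hm))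

end Words

section PiElt

variable {n q : ℕ}

lemma hasWord_PiElt (hqn : q < n) : HasWord n ((q + 1) * (n - q)) (PiElt n q) := by
  have h := ((hasWord_p (n := n) (q := q + 1) hqn).mul
    (hasWord_of_mem_gens (Set.mem_insert t _))).mul
      (hasWord_asc (n := n) (i := 1) (j := q) le_rfl (by omega))
  rw [PiElt_eq hqn]
  convert h using 1
  rw [Nat.add_sub_cancel, show n - q = n - (q + 1) + 1 by omega]
  ring

lemma le_lengthB_PiElt (hqn : q < n) : (q + 1) * (n - q) ≤ lengthB n (PiElt n q) := by
  have hPi := PiElt_apply hqn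
  have hinv : q * (n - q) ≤ #(pairsWith n (fun a b => b < a) (PiElt n q)) := by
    calc q * (n - q) = #(Icc 1 (q : ℤ) ×ˢ Icc (q + 1 : ℤ) n) := by
          rw [card_product, Int.card_Icc, Int.card_Icc,
            show ((q : ℤ) + 1 - 1).toNat = q by omega,
            show ((n : ℤ) + 1 - (q + 1)).toNat = n - q by omega]
      _ ≤ _ := card_le_card fun x hx => by
          rw [mem_product, mem_Icc, mem_Icc] at hx
          refine mk_mem_pairsWith _ (by omega) (by omega) (by omega) ?_
          rw [hPi, hPi]; unfold PiFun; omega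
  have hnsp : n - q - 1 ≤ #(pairsWith n (fun a b => a + b < 0) (PiElt n q)) := by
    calc n - q - 1 = #((Icc (q + 2 : ℤ) n).image ((q + 1 : ℤ), ·)) := by
          rw [card_image_of_injective _ (Prod.mk_right_injective _), Int.card_Icc]; omega
      _ ≤ _ := card_le_card fun x hx => by
          obtain ⟨j, hj, rfl⟩ := mem_image.1 hx
          rw [mem_Icc] at hj
          refine mk_mem_pairsWith _ (by omega) (by omega) (by omega) ?_
          rw [hPi, hPi]; unfold PiFun; omega
  have hneg : 1 ≤ #{i ∈ Icc 1 (n : ℤ) | PiElt n q i < 0} := by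
    refine one_le_card.2 ⟨q + 1, mem_filter.2 ⟨mem_Icc.2 ⟨by omega, by omega⟩, ?_⟩⟩
    rw [hPi]; unfold PiFun; omega
  rw [lengthB, add_one_mul]
  omega

lemma len_PiElt (hqn : q < n) : len n (PiElt n q) = (q + 1) * (n - q) :=
  len_eq_of_hasWord (hasWord_PiElt hqn) (le_lengthB_PiElt hqn)

end PiElt

theorem statement12 (n : ℕ) (hn : 2 ≤ n) (q : ℕ) (hq : q ≤ n - 1) :
    desc 1 (n - q - 1) * t * p n q = p n (q + 1) * t * asc 1 q ∧
    len n (desc 1 (n - q - 1) * t * p n q) = (q + 1) * (n - q) := by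
  have hqn : q < n := by omega
  exact ⟨PiElt_eq hqn, len_PiElt hqn⟩

end BnPaper
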